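/- arXiv:2202.06939 — 2 statements merged into one kernel-verified Lean document; each statement's English description precedes it below -/
import Mathlib

section
/- Let λ₀ > 1 and λ ≥ λ₀. Let χ_λ be the indicator function of {ξ ∈ ℝ^d : |ξ| ≤ λ}. Then there exists a function q : ℝ^d → ℂ with |q(ξ)| ≤ (1 + 2(λ₀² − 1)^{−1}) ⟨ξ⟩^{−2} for all ξ ∈ ℝ^d, such that for every k > 0 and every Schwartz function v on ℝ^d, (1 − χ_λ)(k^{−1}D)v = q(k^{−1}D)((−k^{−2}Δ − 1)v) as elements of L²(ℝ^d), where Δ is the Laplacian on ℝ^d. -/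
open MeasureTheory Complex

noncomputable section

/-- The scaled Fourier transform `𝓕ₖφ(ξ) = ∫ e^{-ik x·ξ} φ(x) dx`. -/
def Fk (d : ℕ) (k : ℝ) (φ : EuclideanSpace ℝ (Fin d) → ℂ) (ξ : EuclideanSpace ℝ (Fin d)) : ℂ :=
  ∫ x : EuclideanSpace ℝ (Fin d), Complex.exp (-(Complex.I * k * (∑ i, x i * ξ i : ℝ))) * φ x

/-- The inverse scaled Fourier transform
`𝓕ₖ⁻¹ψ(x) = (k/(2π))^d ∫ e^{ik x·ξ} ψ(ξ) dξ`. -/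
def FkInv (d : ℕ) (k : ℝ) (ψ : EuclideanSpace ℝ (Fin d) → ℂ) (x : EuclideanSpace ℝ (Fin d)) : ℂ :=
  ((k / (2 * Real.pi)) ^ d : ℝ) *
    ∫ ξ : EuclideanSpace ℝ (Fin d), Complex.exp (Complex.I * k * (∑ i, x i * ξ i : ℝ)) * ψ ξ

/-- The Fourier multiplier `a(k⁻¹D)` applied to `v`, i.e. `𝓕ₖ⁻¹(a ⬝ 𝓕ₖ v)`. -/
def fmult (d : ℕ) (k : ℝ) (a : EuclideanSpace ℝ (Fin d) → ℂ)
    (v : EuclideanSpace ℝ (Fin d) → ℂ) : EuclideanSpace ℝ (Fin d) → ℂ :=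
  FkInv d k (fun ξ => a ξ * Fk d k v ξ)

/-- Partial derivative in the `i`-th coordinate direction. -/
def pd (d : ℕ) (i : Fin d) (f : EuclideanSpace ℝ (Fin d) → ℂ) :
    EuclideanSpace ℝ (Fin d) → ℂ :=
  fun x => fderiv ℝ f x (EuclideanSpace.single i 1)

/-- The Laplacian `Δf = Σᵢ ∂ᵢ²f`. -/
def lap (d : ℕ) (f : EuclideanSpace ℝ (Fin d) → ℂ) : EuclideanSpace ℝ (Fin d) → ℂ :=
  fun x => ∑ i, pd d i (pd d i f) x

/-- The indicator function `χ_λ` of the ball `{ξ : |ξ| ≤ λ}`, as a symbol. -/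
def chiBall (d : ℕ) (lam : ℝ) (ξ : EuclideanSpace ℝ (Fin d)) : ℂ :=
  if ‖ξ‖ ≤ lam then 1 else 0

section Aux

open FourierTransform RealInnerProductSpace

variable {d : ℕ}

lemma inner_sum' (x ξ : EuclideanSpace ℝ (Fin d)) : ⟪x, ξ⟫ = ∑ i, x i * ξ i := by
  simp [PiLp.inner_apply, RCLike.inner_apply, mul_comm]

lemma Fk_eq_fourier (k : ℝ) (φ : EuclideanSpace ℝ (Fin d) → ℂ) (ξ : EuclideanSpace ℝ (Fin d)) :
    Fk d k φ ξ = 𝓕 φ ((k / (2 * Real.pi)) • ξ) := by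
  rw [Real.fourier_eq']
  unfold Fk
  congr 1
  funext x
  rw [smul_eq_mul]
  congr 1
  rw [real_inner_smul_right, inner_sum']
  have : (-2 * Real.pi * (k / (2 * Real.pi) * (∑ i, x i * ξ i)) : ℝ)
      = -(k * (∑ i, x i * ξ i)) := by
    field_simp
  rw [this]
  push_cast
  ring

lemma fourier_fderiv_apply (f : SchwartzMap (EuclideanSpace ℝ (Fin d)) ℂ)
    (m w : EuclideanSpace ℝ (Fin d)) :
    𝓕 (fun x => fderiv ℝ f x m) w = (2 * Real.pi * Complex.I * ⟪w, m⟫) * 𝓕 (⇑f) w := by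
  have hf' : Integrable (fderiv ℝ ⇑f) := by
    have h : fderiv ℝ ⇑f = ⇑(SchwartzMap.fderivCLM ℝ _ _ f) := by
      funext x; simp [SchwartzMap.fderivCLM_apply]
    rw [h]; exact (SchwartzMap.fderivCLM ℝ _ _ f).integrable
  rw [← Real.fourier_continuousLinearMap_apply hf',
    Real.fourier_fderiv f.integrable f.differentiable hf']
  simp [VectorFourier.fourierSMulRight_apply, smul_smul]
  have hin : ((innerSL ℝ) w) m = ⟪w, m⟫ := rfl
  rw [hin]
  ring

lemma Fk_pderiv (k : ℝ) (f : SchwartzMap (EuclideanSpace ℝ (Fin d)) ℂ) (i : Fin d)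
    (ξ : EuclideanSpace ℝ (Fin d)) :
    Fk d k (fun x => fderiv ℝ f x (EuclideanSpace.single i 1)) ξ
      = (Complex.I * k * ξ i) * Fk d k (⇑f) ξ := by
  rw [Fk_eq_fourier, Fk_eq_fourier, fourier_fderiv_apply]
  congr 1
  have h1 : ⟪(k / (2 * Real.pi)) • ξ, (EuclideanSpace.single i 1 : EuclideanSpace ℝ (Fin d))⟫
      = k / (2 * Real.pi) * ξ i := by
    rw [real_inner_smul_left, inner_sum']
    simp [EuclideanSpace.single_apply, Finset.sum_ite_eq']
  rw [h1]
  have hπ : (Real.pi : ℝ) ≠ 0 := Real.pi_ne_zero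
  have : (k / (2 * Real.pi) * ξ i : ℝ) = k * ξ i / (2 * Real.pi) := by ring
  rw [this]
  push_cast
  have hπC : ((Real.pi : ℝ) : ℂ) ≠ 0 := Complex.ofReal_ne_zero.mpr hπ
  field_simp [hπC]

lemma pd_schwartz (f : SchwartzMap (EuclideanSpace ℝ (Fin d)) ℂ) (i : Fin d) :
    pd d i ⇑f = ⇑(LineDeriv.lineDerivOp (EuclideanSpace.single i (1 : ℝ)) f) :=
  funext fun x => (SchwartzMap.lineDerivOp_apply_eq_fderiv _ f x).symm

lemma Fk_pd2 (k : ℝ) (f : SchwartzMap (EuclideanSpace ℝ (Fin d)) ℂ) (i : Fin d)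
    (ξ : EuclideanSpace ℝ (Fin d)) :
    Fk d k (pd d i (pd d i ⇑f)) ξ = (Complex.I * k * ξ i) ^ 2 * Fk d k (⇑f) ξ := by
  rw [pd_schwartz f i]
  have h1 : pd d i ⇑(LineDeriv.lineDerivOp (EuclideanSpace.single i (1 : ℝ)) f)
      = fun x => fderiv ℝ (⇑(LineDeriv.lineDerivOp (EuclideanSpace.single i (1 : ℝ)) f)) x
          (EuclideanSpace.single i 1) := rfl
  rw [h1, Fk_pderiv]
  have h2 : Fk d k (⇑(LineDeriv.lineDerivOp (EuclideanSpace.single i (1 : ℝ)) f)) ξ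
      = (Complex.I * k * ξ i) * Fk d k (⇑f) ξ := by
    rw [← pd_schwartz]
    exact Fk_pderiv k f i ξ
  rw [h2]; ring

lemma integrable_exp_mul (k : ℝ) (ξ : EuclideanSpace ℝ (Fin d))
    (f : SchwartzMap (EuclideanSpace ℝ (Fin d)) ℂ) :
    Integrable (fun x : EuclideanSpace ℝ (Fin d) =>
      Complex.exp (-(Complex.I * k * (∑ i, x i * ξ i : ℝ))) * f x) := by
  apply Integrable.bdd_mul (c := 1) f.integrable
  · apply Continuous.aestronglyMeasurable
    apply Complex.continuous_exp.comp
    apply Continuous.neg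
    apply Continuous.mul continuous_const
    apply Complex.continuous_ofReal.comp
    exact continuous_finset_sum _ fun i _ =>
      ((EuclideanSpace.proj i : EuclideanSpace ℝ (Fin d) →L[ℝ] ℝ).continuous).mul continuous_const
  · refine Filter.Eventually.of_forall fun x => ?_
    rw [Complex.norm_exp]
    simp

lemma Fk_helm (k : ℝ) (hk : k ≠ 0) (v : SchwartzMap (EuclideanSpace ℝ (Fin d)) ℂ)
    (ξ : EuclideanSpace ℝ (Fin d)) :
    Fk d k (fun x => -((k ^ 2 : ℝ) : ℂ)⁻¹ * lap d (⇑v) x - v x) ξ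
      = ((‖ξ‖ ^ 2 - 1 : ℝ) : ℂ) * Fk d k (⇑v) ξ := by
  set g : Fin d → SchwartzMap (EuclideanSpace ℝ (Fin d)) ℂ := fun i =>
    LineDeriv.lineDerivOp (EuclideanSpace.single i (1 : ℝ))
      (LineDeriv.lineDerivOp (EuclideanSpace.single i (1 : ℝ)) v) with hg
  set G : SchwartzMap (EuclideanSpace ℝ (Fin d)) ℂ := ∑ i, g i with hG
  have hGcoe : ∀ x, G x = ∑ i, g i x := by
    intro x
    rw [hG]
    induction (Finset.univ : Finset (Fin d)) using Finset.induction with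
    | empty => simp
    | insert a s h ih => simp_all [Finset.sum_insert h]
  have hlap : lap d ⇑v = ⇑G := by
    funext x
    rw [hGcoe]
    unfold lap
    exact Finset.sum_congr rfl fun i _ => by rw [pd_schwartz v i, pd_schwartz]
  rw [hlap]
  set a : ℂ := -((k ^ 2 : ℝ) : ℂ)⁻¹ with ha
  unfold Fk
  have hsplit : ∀ x : EuclideanSpace ℝ (Fin d),
      Complex.exp (-(Complex.I * k * (∑ i, x i * ξ i : ℝ))) * (a * G x - v x)
        = a * (Complex.exp (-(Complex.I * k * (∑ i, x i * ξ i : ℝ))) * G x)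
          - Complex.exp (-(Complex.I * k * (∑ i, x i * ξ i : ℝ))) * v x := by
    intro x; ring
  simp_rw [hsplit]
  rw [integral_sub ((integrable_exp_mul k ξ G).const_mul a) (integrable_exp_mul k ξ v),
    integral_const_mul]
  have hFkG : (∫ x : EuclideanSpace ℝ (Fin d),
      Complex.exp (-(Complex.I * k * (∑ i, x i * ξ i : ℝ))) * G x)
      = ∑ i, Fk d k (⇑(g i)) ξ := by
    simp_rw [hGcoe, Finset.mul_sum]
    rw [integral_finset_sum _ fun i _ => integrable_exp_mul k ξ (g i)]
    rfl
  rw [hFkG]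
  have hFkgi : ∀ i, Fk d k (⇑(g i)) ξ = (Complex.I * k * ξ i) ^ 2 * Fk d k (⇑v) ξ := by
    intro i
    have h := Fk_pd2 k v i ξ
    rw [pd_schwartz v i, pd_schwartz] at h
    exact h
  simp_rw [hFkgi]
  rw [← Finset.sum_mul]
  have hnorm : (‖ξ‖ ^ 2 : ℝ) = ∑ i, ξ i ^ 2 := by
    rw [EuclideanSpace.norm_eq, Real.sq_sqrt (by positivity)]
    simp [Real.norm_eq_abs, _root_.sq_abs]
  have hsum : (∑ i, (Complex.I * k * ξ i) ^ 2) = -((k ^ 2 : ℝ) : ℂ) * ((‖ξ‖ ^ 2 : ℝ) : ℂ) := by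
    have : ∀ i : Fin d, (Complex.I * k * ξ i) ^ 2 = -((k ^ 2 : ℝ) : ℂ) * ((ξ i : ℂ)) ^ 2 := by
      intro i
      rw [mul_pow, mul_pow, Complex.I_sq]
      push_cast
      ring
    simp_rw [this, ← Finset.mul_sum]
    congr 1
    rw [hnorm]
    push_cast
    ring
  rw [hsum]
  have hk2 : ((k ^ 2 : ℝ) : ℂ) ≠ 0 := by
    simp [pow_eq_zero_iff, hk]
  have hFkv : Fk d k (⇑v) ξ
      = ∫ x : EuclideanSpace ℝ (Fin d),
          Complex.exp (-(Complex.I * k * (∑ i, x i * ξ i : ℝ))) * v x := rfl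
  rw [← hFkv, ha]
  have hkC : (k : ℂ) ≠ 0 := Complex.ofReal_ne_zero.mpr hk
  push_cast
  field_simp [hkC]

end Aux

/-- **Factoring the Helmholtz operator out of the high-frequency cut-off.**
Let `λ₀ > 1` and `λ ≥ λ₀`, and let `χ_λ` be the indicator of `{|ξ| ≤ λ}`.  Then there is a
symbol `q` with `|q(ξ)| ≤ (1 + 2(λ₀²−1)⁻¹)⟨ξ⟩⁻²` for all `ξ`, such that for every `k > 0`
and Schwartz `v`, `(1−χ_λ)(k⁻¹D)v = q(k⁻¹D)((−k⁻²Δ−1)v)` as elements of `L²(ℝ^d)`. -/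
theorem high_frequency_factoring
    {d : ℕ} (lam₀ : ℝ) (hlam₀ : 1 < lam₀) (lam : ℝ) (hlam : lam₀ ≤ lam) :
    ∃ q : EuclideanSpace ℝ (Fin d) → ℂ,
      (∀ ξ, ‖q ξ‖ ≤ (1 + 2 * (lam₀ ^ 2 - 1)⁻¹) * (1 + ‖ξ‖ ^ 2)⁻¹) ∧
      ∀ (k : ℝ), 0 < k → ∀ v : SchwartzMap (EuclideanSpace ℝ (Fin d)) ℂ,
        fmult d k (fun ξ => 1 - chiBall d lam ξ) (fun x => v x) =ᵐ[volume]
          fmult d k q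
            (fun x => -((k ^ 2 : ℝ) : ℂ)⁻¹ * lap d (fun y => v y) x - v x) := by
  refine ⟨fun ξ => (1 - chiBall d lam ξ) * ((‖ξ‖ ^ 2 - 1 : ℝ) : ℂ)⁻¹, ?_, ?_⟩
  · intro ξ
    by_cases h : ‖ξ‖ ≤ lam
    · have hpos₀ : (0 : ℝ) < lam₀ ^ 2 - 1 := by nlinarith
      have h2 : (0:ℝ) ≤ 2 * (lam₀ ^ 2 - 1)⁻¹ := by positivity
      have h3 : (0:ℝ) ≤ (1 + ‖ξ‖ ^ 2)⁻¹ := by positivity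
      simp only [chiBall, if_pos h, sub_self, zero_mul, norm_zero]
      nlinarith
    · push_neg at h
      have h1 : (1 : ℝ) < ‖ξ‖ := lt_of_lt_of_le hlam₀ (le_of_lt (lt_of_le_of_lt hlam h))
      have hlam₀ξ : lam₀ ^ 2 ≤ ‖ξ‖ ^ 2 := by
        apply pow_le_pow_left₀ (by linarith) (le_of_lt (lt_of_le_of_lt hlam h))
      have hpos : (0 : ℝ) < ‖ξ‖ ^ 2 - 1 := by nlinarith
      have hpos₀ : (0 : ℝ) < lam₀ ^ 2 - 1 := by nlinarith
      have hpos1 : (0:ℝ) < 1 + ‖ξ‖ ^ 2 := by positivity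
      have hbinv : (lam₀ ^ 2 - 1) * (lam₀ ^ 2 - 1)⁻¹ = 1 := mul_inv_cancel₀ (ne_of_gt hpos₀)
      have hbinvpos : (0:ℝ) < (lam₀ ^ 2 - 1)⁻¹ := by positivity
      have key : 1 + ‖ξ‖ ^ 2 ≤ (1 + 2 * (lam₀ ^ 2 - 1)⁻¹) * (‖ξ‖ ^ 2 - 1) := by
        have hb : lam₀ ^ 2 - 1 ≤ ‖ξ‖ ^ 2 - 1 := by nlinarith
        nlinarith [mul_le_mul_of_nonneg_left hb (le_of_lt hbinvpos)]
      simp only [chiBall, if_neg (not_le.mpr h), sub_zero, one_mul, norm_inv]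
      have hnrm : ‖(((‖ξ‖ ^ 2 - 1 : ℝ)) : ℂ)‖ = ‖ξ‖ ^ 2 - 1 := by
        rw [Complex.norm_real, Real.norm_eq_abs, abs_of_pos hpos]
      rw [hnrm, show (‖ξ‖ ^ 2 - 1 : ℝ)⁻¹ = 1 / (‖ξ‖ ^ 2 - 1) from (one_div _).symm,
        show ((1 + 2 * (lam₀ ^ 2 - 1)⁻¹) * (1 + ‖ξ‖ ^ 2)⁻¹ : ℝ)
          = (1 + 2 * (lam₀ ^ 2 - 1)⁻¹) / (1 + ‖ξ‖ ^ 2) from by rw [div_eq_mul_inv],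
        div_le_div_iff₀ hpos hpos1, one_mul]
      linarith
  · intro k hk v
    have hfun : (fun ξ => (1 - chiBall d lam ξ) * Fk d k (fun x => v x) ξ)
        = (fun ξ => ((1 - chiBall d lam ξ) * ((‖ξ‖ ^ 2 - 1 : ℝ) : ℂ)⁻¹) *
            Fk d k (fun x => -((k ^ 2 : ℝ) : ℂ)⁻¹ * lap d (fun y => v y) x - v x) ξ) := by
      funext ξ
      rw [Fk_helm k (ne_of_gt hk) v ξ]
      by_cases h : ‖ξ‖ ≤ lam
      · simp [chiBall, h]
      · push_neg at h
        have h1 : (1 : ℝ) < ‖ξ‖ := lt_of_lt_of_le hlam₀ (le_of_lt (lt_of_le_of_lt hlam h))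
        have hpos : (0 : ℝ) < ‖ξ‖ ^ 2 - 1 := by nlinarith
        have hne : (((‖ξ‖ ^ 2 - 1 : ℝ)) : ℂ) ≠ 0 := Complex.ofReal_ne_zero.mpr (ne_of_gt hpos)
        simp only [chiBall, if_neg (not_le.mpr h), sub_zero, one_mul]
        rw [← mul_assoc, inv_mul_cancel₀ hne, one_mul]
    unfold fmult
    rw [hfun]
end
end

section
/- Let H and L be complex Hilbert spaces, j : H → L a bounded linear map, and a : H × H → ℂ a sesquilinear form (linear in the first argument, conjugate-linear in the second). Assume: (continuity) there is C_cont > 0 with |a(u,v)| ≤ C_cont ‖u‖_H ‖v‖_H for all u, v ∈ H; (Gårding inequality) Re a(v,v) ≥ ‖v‖_H² − 2‖j v‖_L² for all v ∈ H; (adjoint solvability) there is a map S* : L → H such that a(v, S*f) = ⟨j v, f⟩_L for all v ∈ H and all f ∈ L. Let H_N ⊆ H be a finite-dimensional subspace and set η(H_N) := sup over nonzero f ∈ L of (inf over v_N ∈ H_N of ‖S*f − v_N‖_H) / ‖f‖_L. If η(H_N) ≤ 1/(2 C_cont), then for every u ∈ H there exists a unique u_N ∈ H_N (the Galerkin solution)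 satisfying a(u_N, v_N) = a(u, v_N) for all v_N ∈ H_N, and this u_N satisfies the quasi-optimal error bound ‖u − u_N‖_H ≤ 2 C_cont · inf over v_N ∈ H_N of ‖u − v_N‖_H. -/
open scoped ComplexConjugate

/-!
For the Galerkin error `e = u - u_N`, Galerkin orthogonality and the adjoint problem give the
duality bound `‖j e‖² = a(e, S*(j e) - v_N) ≤ C ‖e‖ ‖S*(j e) - v_N‖`, which the approximability
hypothesis turns into `‖j e‖ ≤ ‖e‖ / 2`. The Gårding inequality then yields
`‖e‖² / 2 ≤ Re a(e, e) = Re a(e, u - v_N) ≤ C ‖e‖ ‖u - v_N‖`. The same estimate applied to a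
discrete `e` gives uniqueness of the Galerkin solution, and in finite dimensions uniqueness
gives existence.
-/

theorem le_mul_infDist_of_forall_le {X : Type*} [PseudoMetricSpace X] {s : Set X}
    (hs : s.Nonempty) {x : X} {r c : ℝ} (hc : 0 ≤ c) (h : ∀ y ∈ s, r ≤ c * dist x y) :
    r ≤ c * Metric.infDist x s := by
  have : Nonempty s := hs.to_subtype
  rw [Metric.infDist_eq_iInf, Real.mul_iInf_of_nonneg hc]
  exact le_ciInf fun y => h y y.2

theorem LinearMap.surjective_of_injective_of_finiteDimensional
    {V : Type*} [NormedAddCommGroup V] [InnerProductSpace ℂ V] [FiniteDimensional ℂ V]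
    (B : V →ₗ[ℂ] V →ₗ⋆[ℂ] ℂ) (hB : Function.Injective B) : Function.Surjective B := by
  have : CompleteSpace V := FiniteDimensional.complete ℂ V
  -- By Riesz, `y ↦ ⟪·, y⟫` identifies `V` with its conjugate-linear functionals, so that `B`
  -- becomes an injective endomorphism of `V`.
  let J : V →ₗ[ℂ] V →ₗ⋆[ℂ] ℂ := (innerₛₗ ℂ).flip
  have hJ_inj : Function.Injective J := (injective_iff_map_eq_zero J).mpr fun y hy => by
    simpa [J] using congr($hy y)
  have hJ_surj : Function.Surjective J := fun ℓ => by
    let ℓ' : V →ₗ[ℂ] ℂ :=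
      { toFun := fun v => conj (ℓ v), map_add' := by simp, map_smul' := by simp }
    refine ⟨(InnerProductSpace.toDual ℂ V).symm (LinearMap.toContinuousLinearMap ℓ'), ?_⟩
    ext v
    simp [J, ℓ', ← inner_conj_symm (𝕜 := ℂ) v]
  let e := LinearEquiv.ofBijective J ⟨hJ_inj, hJ_surj⟩
  have hT : Function.Surjective (e.symm.toLinearMap ∘ₗ B) :=
    LinearMap.injective_iff_surjective.mp (e.symm.injective.comp hB)
  intro ℓ
  obtain ⟨w, hw⟩ := hT (e.symm ℓ)
  exact ⟨w, e.symm.injective hw⟩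

def sesqFormOfIsLinearMap {𝕜 E : Type*} [RCLike 𝕜] [AddCommGroup E] [Module 𝕜 E]
    (a : E → E → 𝕜) (ha₁ : ∀ v, IsLinearMap 𝕜 (fun u => a u v))
    (ha₂ : ∀ u, IsLinearMap 𝕜 (fun v => conj (a u v))) : E →ₗ[𝕜] E →ₗ⋆[𝕜] 𝕜 :=
  LinearMap.mk₂'ₛₗ (RingHom.id 𝕜) (starRingEnd 𝕜) a
    (fun _ _ v => (ha₁ v).map_add _ _) (fun _ _ v => (ha₁ v).map_smul _ _)
    (fun u _ _ => by simpa using congrArg conj ((ha₂ u).map_add _ _))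
    (fun c u _ => by simpa using congrArg conj ((ha₂ u).map_smul c _))

@[simp]
theorem sesqFormOfIsLinearMap_apply {𝕜 E : Type*} [RCLike 𝕜] [AddCommGroup E] [Module 𝕜 E]
    (a : E → E → 𝕜) (ha₁ : ∀ v, IsLinearMap 𝕜 (fun u => a u v))
    (ha₂ : ∀ u, IsLinearMap 𝕜 (fun v => conj (a u v))) (u v : E) :
    sesqFormOfIsLinearMap a ha₁ ha₂ u v = a u v :=
  rfl

section Schatz

variable {H L : Type*} [NormedAddCommGroup H] [InnerProductSpace ℂ H]
  [NormedAddCommGroup L] [InnerProductSpace ℂ L]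
  {B : H →ₗ[ℂ] H →ₗ⋆[ℂ] ℂ} {j : H →L[ℂ] L} {C : ℝ} {S : L → H} {K : Submodule ℂ H}

theorem norm_apply_sq_le_mul_infDist_of_orthogonal (hC : 0 ≤ C)
    (hcont : ∀ u v, ‖B u v‖ ≤ C * ‖u‖ * ‖v‖) (hS : ∀ v f, B v (S f) = inner ℂ f (j v))
    {e : H} (he : ∀ v ∈ K, B e v = 0) :
    ‖j e‖ ^ 2 ≤ C * ‖e‖ * Metric.infDist (S (j e)) K := by
  refine le_mul_infDist_of_forall_le ⟨0, K.zero_mem⟩ (by positivity) fun v hv => ?_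
  calc ‖j e‖ ^ 2 = ‖B e (S (j e) - v)‖ := by
        rw [map_sub, he v hv, sub_zero, hS, inner_self_eq_norm_sq_to_K]; simp
    _ ≤ C * ‖e‖ * dist (S (j e)) v := by rw [dist_eq_norm]; exact hcont _ _

theorem norm_apply_le_half_of_orthogonal (hC : 0 < C)
    (hcont : ∀ u v, ‖B u v‖ ≤ C * ‖u‖ * ‖v‖) (hS : ∀ v f, B v (S f) = inner ℂ f (j v))
    (hη : ∀ f : L, f ≠ 0 → Metric.infDist (S f) (K : Set H) ≤ ‖f‖ / (2 * C))
    {e : H} (he : ∀ v ∈ K, B e v = 0) :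
    ‖j e‖ ≤ ‖e‖ / 2 := by
  rcases eq_or_ne (j e) 0 with hje | hje
  · rw [hje, norm_zero]; positivity
  have hpos : 0 < ‖j e‖ := norm_pos_iff.mpr hje
  have h := (norm_apply_sq_le_mul_infDist_of_orthogonal hC.le hcont hS he).trans
    (mul_le_mul_of_nonneg_left (hη _ hje) (by positivity))
  rw [mul_div_assoc', le_div_iff₀ (by positivity)] at h
  nlinarith [mul_pos hC hpos]

theorem norm_sq_sub_two_mul_norm_apply_sq_le_of_orthogonal (hC : 0 ≤ C)
    (hcont : ∀ u v, ‖B u v‖ ≤ C * ‖u‖ * ‖v‖)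
    (hgarding : ∀ v, ‖v‖ ^ 2 - 2 * ‖j v‖ ^ 2 ≤ (B v v).re)
    {u uN : H} (huN : uN ∈ K) (horth : ∀ v ∈ K, B (u - uN) v = 0) :
    ‖u - uN‖ ^ 2 - 2 * ‖j (u - uN)‖ ^ 2 ≤ C * ‖u - uN‖ * Metric.infDist u K := by
  refine le_mul_infDist_of_forall_le ⟨0, K.zero_mem⟩ (by positivity) fun v hv => ?_
  have hshift : B (u - uN) (u - uN) = B (u - uN) (u - v) := by
    rw [← sub_sub_sub_cancel_right u v uN, map_sub (B (u - uN)) (u - uN) (v - uN),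
      horth _ (K.sub_mem hv huN), sub_zero]
  calc ‖u - uN‖ ^ 2 - 2 * ‖j (u - uN)‖ ^ 2 ≤ (B (u - uN) (u - uN)).re := hgarding _
    _ = (B (u - uN) (u - v)).re := by rw [hshift]
    _ ≤ ‖B (u - uN) (u - v)‖ := Complex.re_le_norm _
    _ ≤ C * ‖u - uN‖ * dist u v := by rw [dist_eq_norm]; exact hcont _ _

theorem norm_sub_le_mul_infDist_of_orthogonal (hC : 0 < C)
    (hcont : ∀ u v, ‖B u v‖ ≤ C * ‖u‖ * ‖v‖)
    (hgarding : ∀ v, ‖v‖ ^ 2 - 2 * ‖j v‖ ^ 2 ≤ (B v v).re)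
    (hS : ∀ v f, B v (S f) = inner ℂ f (j v))
    (hη : ∀ f : L, f ≠ 0 → Metric.infDist (S f) (K : Set H) ≤ ‖f‖ / (2 * C))
    {u uN : H} (huN : uN ∈ K) (horth : ∀ v ∈ K, B (u - uN) v = 0) :
    ‖u - uN‖ ≤ 2 * C * Metric.infDist u K := by
  have hj := norm_apply_le_half_of_orthogonal hC hcont hS hη horth
  have hg := norm_sq_sub_two_mul_norm_apply_sq_le_of_orthogonal hC.le hcont hgarding huN horth
  have hsq : 2 * ‖j (u - uN)‖ ^ 2 ≤ ‖u - uN‖ ^ 2 / 2 := by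
    nlinarith [norm_nonneg (j (u - uN))]
  have hmul : ‖u - uN‖ * ‖u - uN‖ ≤ ‖u - uN‖ * (2 * C * Metric.infDist u K) := by
    nlinarith
  rcases (norm_nonneg (u - uN)).eq_or_lt with h0 | hpos
  · rw [← h0]; exact mul_nonneg (by positivity) Metric.infDist_nonneg
  · exact le_of_mul_le_mul_left hmul hpos

theorem eq_zero_of_mem_of_orthogonal (hC : 0 < C)
    (hcont : ∀ u v, ‖B u v‖ ≤ C * ‖u‖ * ‖v‖)
    (hgarding : ∀ v, ‖v‖ ^ 2 - 2 * ‖j v‖ ^ 2 ≤ (B v v).re)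
    (hS : ∀ v f, B v (S f) = inner ℂ f (j v))
    (hη : ∀ f : L, f ≠ 0 → Metric.infDist (S f) (K : Set H) ≤ ‖f‖ / (2 * C))
    {w : H} (hw : w ∈ K) (horth : ∀ v ∈ K, B w v = 0) : w = 0 := by
  have := norm_sub_le_mul_infDist_of_orthogonal hC hcont hgarding hS hη K.zero_mem
    (by simpa using horth)
  simpa [Metric.infDist_zero_of_mem hw] using this

end Schatz

theorem schatz_quasioptimality_general
    {H L : Type*} [NormedAddCommGroup H] [InnerProductSpace ℂ H]
    [NormedAddCommGroup L] [InnerProductSpace ℂ L]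
    (j : H →L[ℂ] L) (a : H → H → ℂ)
    (ha₁ : ∀ v : H, IsLinearMap ℂ (fun u => a u v))
    (ha₂ : ∀ u : H, IsLinearMap ℂ (fun v => conj (a u v)))
    (Ccont : ℝ) (hCcont : 0 < Ccont)
    (hcont : ∀ u v : H, ‖a u v‖ ≤ Ccont * ‖u‖ * ‖v‖)
    (hgarding : ∀ v : H, ‖v‖ ^ 2 - 2 * ‖j v‖ ^ 2 ≤ (a v v).re)
    (Sstar : L → H)
    (hS : ∀ (v : H) (f : L), a v (Sstar f) = inner ℂ f (j v))
    (HN : Submodule ℂ H) [FiniteDimensional ℂ HN]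
    (hη : ∀ f : L, f ≠ 0 → Metric.infDist (Sstar f) (HN : Set H) ≤ ‖f‖ / (2 * Ccont))
    (u : H) :
    ∃ uN ∈ HN,
      (∀ vN ∈ HN, a uN vN = a u vN) ∧
      ‖u - uN‖ ≤ 2 * Ccont * Metric.infDist u (HN : Set H) ∧
      ∀ wN ∈ HN, (∀ vN ∈ HN, a wN vN = a u vN) → wN = uN := by
  let B := sesqFormOfIsLinearMap a ha₁ ha₂
  have eq_zero {w : H} (hw : w ∈ HN) (horth : ∀ v ∈ HN, B w v = 0) : w = 0 :=
    eq_zero_of_mem_of_orthogonal hCcont hcont hgarding hS hη hw horth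
  have hBN_inj : Function.Injective (B.domRestrict₁₂ HN HN) :=
    (injective_iff_map_eq_zero _).mpr fun w hw =>
      Subtype.ext (eq_zero w.2 fun v hv => congr($hw ⟨v, hv⟩))
  obtain ⟨uN, huN⟩ := LinearMap.surjective_of_injective_of_finiteDimensional _ hBN_inj
    ((B u).domRestrict HN)
  have hsol : ∀ vN ∈ HN, a uN vN = a u vN := fun v hv => congr($huN ⟨v, hv⟩)
  refine ⟨uN, uN.2, hsol, ?_, fun w hw hw_sol => ?_⟩
  · refine norm_sub_le_mul_infDist_of_orthogonal (B := B) hCcont hcont hgarding hS hη uN.2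
      fun v hv => ?_
    simp [B, hsol v hv]
  · refine sub_eq_zero.mp (eq_zero (HN.sub_mem hw uN.2) fun v hv => ?_)
    simp [B, hsol v hv, hw_sol v hv]

/-- **The Schatz argument: sufficient conditions for quasi-optimality of the Galerkin
method.**
Let `H, L` be complex Hilbert spaces, `j : H → L` bounded linear, and `a` a sesquilinear
form on `H` (linear in the first argument, conjugate-linear in the second) that is
continuous with constant `C_cont` and satisfies the Gårding inequality
`Re a(v,v) ≥ ‖v‖² − 2‖jv‖²`.  Let `S* : L → H` solve the adjoint problem
`a(v, S*f) = (jv, f)_L` for all `v, f` (with the `L²`-type pairing, linear in the first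
slot, i.e. Mathlib's `⟪f, jv⟫`).  Let `H_N ⊆ H` be a finite-dimensional subspace with
adjoint approximability `η(H_N) ≤ 1/(2C_cont)`, i.e.
`infDist (S*f) H_N ≤ ‖f‖/(2C_cont)` for every `f ≠ 0`.  Then for every `u ∈ H` the
Galerkin solution `u_N ∈ H_N` (with `a(u_N, v_N) = a(u, v_N)` for all `v_N ∈ H_N`)
exists, is unique, and satisfies `‖u − u_N‖ ≤ 2 C_cont · inf_{v_N ∈ H_N} ‖u − v_N‖`. -/
theorem schatz_quasioptimality
    {H L : Type*} [NormedAddCommGroup H] [InnerProductSpace ℂ H] [CompleteSpace H]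
    [NormedAddCommGroup L] [InnerProductSpace ℂ L] [CompleteSpace L]
    (j : H →L[ℂ] L) (a : H → H → ℂ)
    (ha₁ : ∀ v : H, IsLinearMap ℂ (fun u => a u v))
    (ha₂ : ∀ u : H, IsLinearMap ℂ (fun v => conj (a u v)))
    (Ccont : ℝ) (hCcont : 0 < Ccont)
    (hcont : ∀ u v : H, ‖a u v‖ ≤ Ccont * ‖u‖ * ‖v‖)
    (hgarding : ∀ v : H, ‖v‖ ^ 2 - 2 * ‖j v‖ ^ 2 ≤ (a v v).re)
    (Sstar : L → H)
    (hS : ∀ (v : H) (f : L), a v (Sstar f) = inner ℂ f (j v))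
    (HN : Submodule ℂ H) [FiniteDimensional ℂ HN]
    (hη : ∀ f : L, f ≠ 0 → Metric.infDist (Sstar f) (HN : Set H) ≤ ‖f‖ / (2 * Ccont))
    (u : H) :
    ∃ uN ∈ HN,
      (∀ vN ∈ HN, a uN vN = a u vN) ∧
      ‖u - uN‖ ≤ 2 * Ccont * Metric.infDist u (HN : Set H) ∧
      ∀ wN ∈ HN, (∀ vN ∈ HN, a wN vN = a u vN) → wN = uN :=
  schatz_quasioptimality_general j a ha₁ ha₂ Ccont hCcont hcont hgarding Sstar hS HN hη u
end
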